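/- arXiv:1804.04012 — 3 statements merged into one kernel-verified Lean document; each statement's English description precedes it below -/
import Mathlib

section
/- Completing one full pass of SARSA updates (with zero reward) along a closed trajectory strictly decreases the maximum E-value over the trajectory, assuming all E-values are initially positive, 0 < α ≤ 1 and 0 ≤ γ_E < 1. -/
/-- One full pass of zero-reward SARSA updates along a closed trajectory
strictly decreases the maximal E-value, assuming all initial E-values are
positive. `E k` is the vector of values after the first `k` updates;
update `k` replaces coordinate `k` using the current value at coordinate
`k+1` (cyclically). -/
theorem stmt_2 (n : ℕ) (α γE : ℝ) (hα0 : 0 < α) (hα1 : α ≤ 1)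
    (hγ0 : 0 ≤ γE) (hγ1 : γE < 1)
    (E : ℕ → Fin (n + 1) → ℝ) (hpos : ∀ i, 0 < E 0 i)
    (hupd : ∀ k : ℕ, ∀ hk : k ≤ n,
      E (k + 1) = Function.update (E k) (⟨k, by omega⟩ : Fin (n + 1))
        ((1 - α) * E k ⟨k, by omega⟩ +
          α * γE * E k ((⟨k, by omega⟩ : Fin (n + 1)) + 1))) :
    Finset.univ.sup' Finset.univ_nonempty (E (n + 1)) <
      Finset.univ.sup' Finset.univ_nonempty (E 0) := by
  set M := Finset.univ.sup' Finset.univ_nonempty (E 0) with hM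
  have hM0 : 0 < M :=
    lt_of_lt_of_le (hpos 0) (Finset.le_sup' _ (Finset.mem_univ 0))
  have hle : ∀ k, k ≤ n + 1 → ∀ i, E k i ≤ M := by
    intro k
    induction k with
    | zero => intro _ i; exact Finset.le_sup' _ (Finset.mem_univ i)
    | succ k ih =>
      intro hk i
      have hk' : k ≤ n := by omega
      rw [hupd k hk']
      rcases eq_or_ne i (⟨k, by omega⟩ : Fin (n + 1)) with h | h
      · subst h
        rw [Function.update_self]
        have h1 := ih (by omega) ⟨k, by omega⟩
        have h2 := ih (by omega) ((⟨k, by omega⟩ : Fin (n + 1)) + 1)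
        have ha : (0:ℝ) ≤ 1 - α := by linarith
        have hb : (0:ℝ) ≤ α * γE := mul_nonneg hα0.le hγ0
        have hc : 0 ≤ α * (1 - γE) * M :=
          mul_nonneg (mul_nonneg hα0.le (by linarith)) hM0.le
        nlinarith [mul_le_mul_of_nonneg_left h1 ha, mul_le_mul_of_nonneg_left h2 hb]
      · rw [Function.update_of_ne h]
        exact ih (by omega) i
  have key : ∀ i : Fin (n + 1), E (n + 1) i < M := by
    intro i
    have hstable : ∀ m, i.val + 1 ≤ m → m ≤ n + 1 → E m i = E (i.val + 1) i := by
      intro m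
      induction m with
      | zero => omega
      | succ m ih =>
        intro h1 h2
        rcases eq_or_lt_of_le h1 with h | h
        · rw [← h]
        · have hm : i.val + 1 ≤ m := by omega
          have hmn : m ≤ n := by omega
          rw [hupd m hmn, Function.update_of_ne, ih hm (by omega)]
          intro hc
          apply_fun Fin.val at hc
          simp at hc
          omega
    have hval : E (n + 1) i = E (i.val + 1) i := hstable (n + 1) (by omega) le_rfl
    have hin : i.val ≤ n := by omega
    have heq : i = (⟨i.val, by omega⟩ : Fin (n + 1)) := by ext; rfl
    rw [hval, hupd i.val hin, Function.update_apply, if_pos heq]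
    have h1 := hle i.val (by omega) ⟨i.val, by omega⟩
    have h2 := hle i.val (by omega) ((⟨i.val, by omega⟩ : Fin (n + 1)) + 1)
    have ha : (0:ℝ) ≤ 1 - α := by linarith
    have hb : (0:ℝ) ≤ α * γE := mul_nonneg hα0.le hγ0
    have hc : 0 < α * (1 - γE) * M := mul_pos (mul_pos hα0 (by linarith)) hM0
    nlinarith [mul_le_mul_of_nonneg_left h1 ha, mul_le_mul_of_nonneg_left h2 hb]
  rw [Finset.sup'_lt_iff]
  exact fun i _ => key i
end

section
/- Determinization theorem: let b : ℕ → ℝ be a sublinear function (b(t)/t → 0). Any deterministic policy over a finite action set that at each step T chooses an action a with C_T(a)/T − f(a) ≤ b(T)/T (incrementing its counter) satisfies, for every action a, lim_{T→∞} C_T(a)/T = f(a). -/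
open Filter

/-- Determinization theorem: for sublinear b, any deterministic policy
choosing at each step T an action a with C_T(a) − T·f(a) ≤ b(T) (and
incrementing its counter) has empirical frequencies converging to f. -/
theorem stmt_7 (A : Type*) [Fintype A] [DecidableEq A] [Nonempty A]
    (f : A → ℝ) (hf0 : ∀ a, 0 ≤ f a) (hf1 : ∑ a, f a = 1)
    (b : ℕ → ℝ) (hb : Tendsto (fun t => b t / t) atTop (nhds 0))
    (C : ℕ → A → ℕ)
    (hsum : ∀ T, 1 ≤ T → ∑ a, C T a = T)
    (hstep : ∀ T, 1 ≤ T → ∃ a,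
      (C T a : ℝ) - T * f a ≤ b T ∧
      C (T + 1) = Function.update (C T) a (C T a + 1)) :
    ∀ a, Tendsto (fun T => (C T a : ℝ) / T) atTop (nhds (f a)) := by
  intro a
  have hcard : 1 ≤ Fintype.card A := Fintype.card_pos
  set n : ℝ := (Fintype.card A : ℝ) with hn
  have hn1 : 1 ≤ n := by rw [hn]; exact_mod_cast hcard
  have key : Tendsto (fun T : ℕ => ((C T a : ℝ) - T * f a) / T) atTop (nhds 0) := by
    rw [Metric.tendsto_atTop]
    intro ε' hε'
    set ε : ℝ := ε' / (2 * n) with hεdef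
    have hε : 0 < ε := by positivity
    obtain ⟨N0, hN0⟩ := Metric.tendsto_atTop.mp hb ε hε
    set N : ℕ := max N0 1 with hNdef
    have hN1 : 1 ≤ N := le_max_right _ _
    have hbt : ∀ t : ℕ, N ≤ t → b t ≤ ε * t := by
      intro t ht
      have h1t : 1 ≤ t := le_trans hN1 ht
      have ht0 : (0:ℝ) < t := by exact_mod_cast h1t
      have h := hN0 t (le_trans (le_max_left _ _) ht)
      rw [Real.dist_eq, sub_zero] at h
      have h2 := (abs_lt.mp h).2
      rw [div_lt_iff₀ ht0] at h2
      linarith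
    set K : ℝ := Finset.univ.sup' Finset.univ_nonempty (fun a' => (C N a' : ℝ) - N * f a') with hK
    have hKle : ∀ a', (C N a' : ℝ) - N * f a' ≤ K := fun a' =>
      Finset.le_sup' (fun a' => (C N a' : ℝ) - N * f a') (Finset.mem_univ a')
    have main : ∀ T, N ≤ T → ∀ a', (C T a' : ℝ) - T * f a' ≤ max K (ε * T + 1) := by
      intro T hT
      induction T, hT using Nat.le_induction with
      | base => intro a'; exact (hKle a').trans (le_max_left _ _)
      | succ T hT ih =>
        intro a'
        have hT1 : 1 ≤ T := le_trans hN1 hT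
        obtain ⟨a0, h1, h2⟩ := hstep T hT1
        have hbT := hbt T hT
        rw [h2]
        by_cases hA : a' = a0
        · subst hA
          rw [Function.update_self]
          push_cast
          have hfa := hf0 a'
          have hle : (C T a' : ℝ) + 1 - (T + 1) * f a' ≤ ε * (T + 1) + 1 := by nlinarith
          exact hle.trans (le_max_right _ _)
        · rw [Function.update_of_ne hA]
          have h3 := ih a'
          have hfa := hf0 a'
          have hT0 : (0:ℝ) ≤ T := by positivity
          have hmax : max K (ε * T + 1) ≤ max K (ε * (T + 1) + 1) :=
            max_le_max le_rfl (by nlinarith)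
          push_cast
          calc (C T a' : ℝ) - (T + 1) * f a' ≤ (C T a' : ℝ) - T * f a' := by nlinarith
            _ ≤ max K (ε * T + 1) := h3
            _ ≤ _ := hmax
    have habs : ∀ T, N ≤ T → |(C T a : ℝ) - T * f a| ≤ n * max K (ε * T + 1) := by
      intro T hT
      have hT1 : 1 ≤ T := le_trans hN1 hT
      set M := max K (ε * T + 1) with hM
      have hM1 : (1:ℝ) ≤ M := by
        have hεT : (0:ℝ) ≤ ε * T := by positivity
        exact le_max_of_le_right (by linarith)
      have hsum0 : ∑ a', ((C T a' : ℝ) - T * f a') = 0 := by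
        rw [Finset.sum_sub_distrib, ← Finset.mul_sum, hf1]
        have h := hsum T hT1
        have h2 : (∑ a', (C T a' : ℝ)) = T := by exact_mod_cast h
        rw [h2]; ring
      have hsplit : ((C T a : ℝ) - T * f a) +
          ∑ a' ∈ Finset.univ.erase a, ((C T a' : ℝ) - T * f a') = 0 := by
        rw [← hsum0, ← Finset.add_sum_erase _ _ (Finset.mem_univ a)]
      have hbound : ∑ a' ∈ Finset.univ.erase a, ((C T a' : ℝ) - T * f a') ≤ n * M := by
        calc ∑ a' ∈ Finset.univ.erase a, ((C T a' : ℝ) - T * f a')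
            ≤ (Finset.univ.erase a).card • M :=
              Finset.sum_le_card_nsmul _ _ _ (fun a' _ => main T hT a')
          _ ≤ n * M := by
              rw [nsmul_eq_mul]
              have hc : ((Finset.univ.erase a).card : ℝ) ≤ n := by
                rw [hn]
                exact_mod_cast Finset.card_le_card (Finset.subset_univ _)
              nlinarith
      rw [abs_le]
      constructor
      · linarith
      · have h := main T hT a
        nlinarith
    obtain ⟨T0, hT0⟩ := exists_nat_gt (2 * n * (|K| + 1) / ε')
    refine ⟨max N (max T0 1), fun T hT => ?_⟩
    have hTN : N ≤ T := le_trans (le_max_left _ _) hT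
    have hTT0 : T0 ≤ T := le_trans (le_trans (le_max_left _ _) (le_max_right _ _)) hT
    have hT1 : 1 ≤ T := le_trans (le_trans (le_max_right _ _) (le_max_right _ _)) hT
    have hTpos : (0:ℝ) < T := by exact_mod_cast hT1
    rw [Real.dist_eq, sub_zero, abs_div, abs_of_pos hTpos, div_lt_iff₀ hTpos]
    have h1 := habs T hTN
    have hmaxle : max K (ε * T + 1) ≤ |K| + ε * T + 1 := by
      apply max_le
      · nlinarith [le_abs_self K, hε.le, hTpos.le]
      · nlinarith [abs_nonneg K]
    have hTbig : 2 * n * (|K| + 1) / ε' < (T : ℝ) := lt_of_lt_of_le hT0 (by exact_mod_cast hTT0)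
    have hTbig' : 2 * n * (|K| + 1) < ε' * T := by
      rw [div_lt_iff₀ hε'] at hTbig; linarith
    have hnε : n * ε = ε' / 2 := by
      rw [hεdef]; field_simp
    have hMle : n * max K (ε * T + 1) ≤ n * (|K| + ε * T + 1) := by nlinarith
    calc |(C T a : ℝ) - T * f a| ≤ n * (|K| + ε * T + 1) := le_trans h1 hMle
      _ = n * (|K| + 1) + n * ε * T := by ring
      _ < ε' * T / 2 + ε' / 2 * T := by nlinarith
      _ = ε' * T := by ring
  have heq : (fun T : ℕ => ((C T a : ℝ) - T * f a) / T + f a) =ᶠ[atTop]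
      (fun T : ℕ => (C T a : ℝ) / T) := by
    filter_upwards [eventually_ge_atTop 1] with T hT
    have hTpos : (0:ℝ) < T := by exact_mod_cast hT
    field_simp
    ring
  have h := key.add (tendsto_const_nhds (x := f a))
  rw [zero_add] at h
  exact Tendsto.congr' heq h
end

section
/- Inductive step of the determinization bound: suppose at time T every action satisfies C_T(a)/T − f(a) ≤ (1+b(T))/T for a nonnegative nondecreasing b, and the policy chooses an action a* with C_T(a*)/T − f(a*) ≤ b(T)/T, incrementing only C(a*). Then at time T+1, every action a satisfies C_{T+1}(a)/(T+1) − f(a) ≤ (1+b(T+1))/(T+1). -/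
/-!
Clearing the denominator, the bound at time `T` reads `C a ≤ f a * T + 1 + b T`, and the
choice of `a*` gives the sharper `C a* ≤ f a* * T + b T`. Passing to `T + 1` the right-hand
side grows by `f a + b (T + 1) - b T ≥ 0`, which pays for the unchanged counters; for `a*`
the extra `1` of slack pays for its increment.
-/

lemma div_sub_le_div_iff_le_mul_add {x p c t : ℝ} (ht : 0 < t) :
    x / t - p ≤ c / t ↔ x ≤ p * t + c := by
  rw [sub_le_iff_le_add, div_add' _ _ _ ht.ne', div_le_div_iff_of_pos_right ht, add_comm]

theorem stmt_9_general (A : Type*) [DecidableEq A]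
    (f : A → ℝ) (hf0 : ∀ a, 0 ≤ f a)
    (b : ℕ → ℝ) (hbmono : Monotone b)
    (T : ℕ) (hT : 1 ≤ T)
    (C : A → ℕ)
    (hbound : ∀ a, (C a : ℝ) / T - f a ≤ (1 + b T) / T)
    (astar : A) (hchoice : (C astar : ℝ) / T - f astar ≤ b T / T) :
    ∀ a, ((Function.update C astar (C astar + 1)) a : ℝ) / (T + 1) - f a ≤
      (1 + b (T + 1)) / (T + 1) := by
  intro a
  have hTpos : (0 : ℝ) < T := by exact_mod_cast hT
  have hb_step : b T ≤ b (T + 1) := hbmono T.le_succ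
  have hfa := hf0 a
  rw [div_sub_le_div_iff_le_mul_add (by positivity)]
  rcases eq_or_ne a astar with rfl | ha
  · have hC := (div_sub_le_div_iff_le_mul_add hTpos).1 hchoice
    rw [Function.update_self]
    push_cast
    linarith
  · have hC := (div_sub_le_div_iff_le_mul_add hTpos).1 (hbound a)
    rw [Function.update_of_ne ha]
    linarith

/-- Inductive step of the determinization bound: if at time T every action
satisfies C_T(a)/T − f(a) ≤ (1+b(T))/T with b nonnegative nondecreasing,
and the chosen action a* satisfies C_T(a*)/T − f(a*) ≤ b(T)/T, then after
incrementing C(a*), every action satisfies the bound at time T+1. -/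
theorem stmt_9 (A : Type*) [Fintype A] [DecidableEq A]
    (f : A → ℝ) (hf0 : ∀ a, 0 ≤ f a) (hf1 : ∑ a, f a = 1)
    (b : ℕ → ℝ) (hb0 : ∀ t, 0 ≤ b t) (hbmono : Monotone b)
    (T : ℕ) (hT : 1 ≤ T)
    (C : A → ℕ) (hsum : ∑ a, C a = T)
    (hbound : ∀ a, (C a : ℝ) / T - f a ≤ (1 + b T) / T)
    (astar : A) (hchoice : (C astar : ℝ) / T - f astar ≤ b T / T) :
    ∀ a, ((Function.update C astar (C astar + 1)) a : ℝ) / (T + 1) - f a ≤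
      (1 + b (T + 1)) / (T + 1) :=
  stmt_9_general A f hf0 b hbmono T hT C hbound astar hchoice
end
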